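/- Let f₁,…,f_n be linear functions, none of which is constant or identical, and assume at least one is monotone decreasing. Let σ be an optimal permutation of [n]. Then there exist angles ψ₁∈(0,π) and ψ₂∈(π,2π) such that θ(f_{σ(i)}) ∈ [ψ₁,ψ₂] for every i∈L^σ and θ(f_{σ(i)}) ∈ [ψ₂,ψ₁]_{2π} for every i∈U^σ. -/

import Mathlib

/-!
Exchanging two adjacent blocks `X`, `Y` of an optimal order changes `β` of the composite by
`α(R) · det (vec X, vec Y)`, where `R` is the block that follows, so optimality makes this
quantity nonnegative. A nondecreasing function is in `L^σ` or `U^σ` according to the sign of `α`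
of the composite of the functions after it, and between an `L`-function and a `U`-function sits
a block whose composite is decreasing, hence whose vector points into the upper half plane.
Exchanging each of the two functions with that block shows that, within each open half plane,
the `U`-vectors lie on one side of the `L`-vectors; exchanges with a block containing a
decreasing function show that no `L`-vector points along the positive and no `U`-vector along
the negative `x`-axis. Finitely many directions separated this way admit the two angles.
-/

/-- A linear function `x ↦ a*x + b`. -/
structure LinFun where
  a : ℝ
  b : ℝ

namespace LinFun

/-- Evaluation of a linear function. -/
def eval (f : LinFun) (x : ℝ) : ℝ := f.a * x + f.b

/-- Composition: `h.comp g` is the linear function `x ↦ h (g x)`. -/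
def comp (h g : LinFun) : LinFun := ⟨h.a * g.a, h.a * g.b + h.b⟩

/-- The identical linear function `x ↦ x`. -/
def idf : LinFun := ⟨1, 0⟩

/-- `f` is the identical function (equivalently, its vector `(β f, 1 - α f)` is `(0,0)`,
i.e. its angle is `⊥`). -/
def IsId (f : LinFun) : Prop := f = idf

/-- The Euclidean norm of the vector `(β f, 1 - α f)` associated to `f`. -/
noncomputable def vecNorm (f : LinFun) : ℝ := Real.sqrt (f.b ^ 2 + (1 - f.a) ^ 2)

/-- The polar angle in `[0, 2π)` of the vector `(β f, 1 - α f)` associated to `f`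
(meaningful only when `f` is not identical). -/
noncomputable def theta (f : LinFun) : ℝ :=
  if 0 ≤ Complex.arg ⟨f.b, 1 - f.a⟩ then Complex.arg ⟨f.b, 1 - f.a⟩
  else Complex.arg ⟨f.b, 1 - f.a⟩ + 2 * Real.pi

end LinFun

/-- Congruence of angles modulo `2π`: `x ≡_{2π} y`. -/
def Cong (x y : ℝ) : Prop := ∃ k : ℤ, x - y = 2 * Real.pi * k

/-- The set `[t1, t2]_{2π}`. -/
def Icc2pi (t1 t2 : ℝ) : Set ℝ :=
  {θ | ∃ l1 l2 : ℝ, Cong l1 t1 ∧ Cong l2 t2 ∧ 0 ≤ l2 - l1 ∧ l2 - l1 < 2 * Real.pi ∧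
    θ ∈ Set.Icc l1 l2}

/-- The set `(t1, t2)_{2π}`. -/
def Ioo2pi (t1 t2 : ℝ) : Set ℝ :=
  {θ | ∃ l1 l2 : ℝ, Cong l1 t1 ∧ Cong l2 t2 ∧ 0 ≤ l2 - l1 ∧ l2 - l1 < 2 * Real.pi ∧
    θ ∈ Set.Ioo l1 l2}

/-- Composite of a list of linear functions: `compList [g₁, …, g_m] = g_m ∘ ⋯ ∘ g₁`. -/
def compList (L : List LinFun) : LinFun := L.foldl (fun acc g => g.comp acc) LinFun.idf

/-- The list `f_{σ(1)}, …, f_{σ(n)}` (0-indexed positions). -/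
def permList {n : ℕ} (f : Fin n → LinFun) (σ : Equiv.Perm (Fin n)) : List LinFun :=
  List.ofFn fun i => f (σ i)

/-- `f^σ = f_{σ(n)} ∘ ⋯ ∘ f_{σ(1)}`. -/
def permComp {n : ℕ} (f : Fin n → LinFun) (σ : Equiv.Perm (Fin n)) : LinFun :=
  compList (permList f σ)

/-- The composite of the functions at the (0-indexed) positions `a, a+1, …, b` of `σ`:
`f_{σ(b)} ∘ ⋯ ∘ f_{σ(a)}` (in 0-indexed notation). -/
def segComp {n : ℕ} (f : Fin n → LinFun) (σ : Equiv.Perm (Fin n)) (a b : ℕ) : LinFun :=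
  compList (((permList f σ).drop a).take (b + 1 - a))

/-- The composite corresponding to the `k`-shift `σ_k` of `σ`:
`f^{σ_k} = f_{σ(k)} ∘ ⋯ ∘ f_{σ(1)} ∘ f_{σ(n)} ∘ ⋯ ∘ f_{σ(k+1)}` (1-indexed notation). -/
def shiftComp {n : ℕ} (f : Fin n → LinFun) (σ : Equiv.Perm (Fin n)) (k : ℕ) : LinFun :=
  compList ((permList f σ).rotate k)

/-- `σ` is a minimum (optimal) permutation for `f₁, …, f_n`. -/
def IsMinimum {n : ℕ} (f : Fin n → LinFun) (σ : Equiv.Perm (Fin n)) : Prop :=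
  ∀ ρ : Equiv.Perm (Fin n), (permComp f σ).b ≤ (permComp f ρ).b

/-- `μ` belongs to the neighbourhood `N(σ)`: it is obtained from `σ` by swapping two
adjacent blocks of positions, `(l, …, m)` and `(m+1, …, r)` (0-indexed, `l ≤ m < r < n`). -/
def InNbhd {n : ℕ} (σ μ : Equiv.Perm (Fin n)) : Prop :=
  ∃ (l m r : ℕ) (_ : l ≤ m) (_ : m < r) (_ : r < n),
    (∀ i : Fin n, (i.val < l ∨ r < i.val) → μ i = σ i) ∧
    (∀ i : Fin n, ∀ _ : l ≤ i.val, ∀ _ : i.val < l + r - m,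
      μ i = σ ⟨i.val + m + 1 - l, by omega⟩) ∧
    (∀ i : Fin n, ∀ _ : l + r - m ≤ i.val, ∀ _ : i.val ≤ r,
      μ i = σ ⟨i.val + m - r, by omega⟩)

/-- `σ` is locally optimal for `f₁, …, f_n`. -/
def LocallyOptimal {n : ℕ} (f : Fin n → LinFun) (σ : Equiv.Perm (Fin n)) : Prop :=
  ∀ μ : Equiv.Perm (Fin n), InNbhd σ μ → (permComp f σ).b ≤ (permComp f μ).b

/-- `σ` is counterclockwise: ignoring the identical functions, some rotation of the sequence
of angles `θ(f_{σ(1)}), …, θ(f_{σ(n)})` is nondecreasing. -/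
def Counterclockwise {n : ℕ} (f : Fin n → LinFun) (σ : Equiv.Perm (Fin n)) : Prop :=
  ∃ c : ℕ, ∀ i j : Fin n, ¬ (f (σ i)).IsId → ¬ (f (σ j)).IsId →
    ((c ≤ i.val ∧ i ≤ j) ∨ (i ≤ j ∧ j.val < c) ∨ (c ≤ i.val ∧ j.val < c)) →
    (f (σ i)).theta ≤ (f (σ j)).theta

/-- `f₁, …, f_n` are colinear: all vectors lie on one line through the origin. -/
def Colinear {n : ℕ} (f : Fin n → LinFun) : Prop :=
  ∃ lam : ℝ, ∀ i : Fin n,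
    (f i).IsId ∨ Cong ((f i).theta) lam ∨ Cong ((f i).theta) (lam + Real.pi)

/-- `f₁, …, f_n` are potentially identical: some counterclockwise permutation composes
to the identical function. -/
def PotentiallyIdentical {n : ℕ} (f : Fin n → LinFun) : Prop :=
  ∃ σ : Equiv.Perm (Fin n), Counterclockwise f σ ∧ (permComp f σ).IsId

/-- The ε-perturbation `f^{(ε)}` of a linear function. -/
noncomputable def epsPert (f : LinFun) (ε : ℝ) : LinFun := if f.a = 0 then ⟨ε, f.b⟩ else f

theorem List.prod_pos_iff_even_countP_neg {R : Type*} [CommRing R] [LinearOrder R]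
    [IsStrictOrderedRing R] {l : List R} (hl : ∀ x ∈ l, x ≠ 0) :
    0 < l.prod ↔ Even (l.countP (· < 0)) := by
  induction l with
  | nil => simp
  | cons x l ih =>
    simp only [List.mem_cons, forall_eq_or_imp] at hl
    have hprod : l.prod ≠ 0 := List.prod_ne_zero fun h0 => hl.2 0 h0 rfl
    rw [List.prod_cons, List.countP_cons]
    rcases hl.1.lt_or_gt with hx | hx
    · simp only [hx, decide_true, if_true, Nat.even_add_one, ← ih hl.2, mul_pos_iff, hx.not_gt,
        false_and, true_and, false_or]
      exact ⟨fun h => h.not_gt, fun h => hprod.lt_or_gt.resolve_right h⟩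
    · simp [hx.not_gt, mul_pos_iff_of_pos_left hx, ih hl.2]

theorem List.eq_or_exists_of_append_cons_eq {α : Type*} {A B A' B' : List α} {g h : α}
    (H : A ++ g :: B = A' ++ h :: B') :
    (A = A' ∧ g = h ∧ B = B') ∨ (∃ M, B = M ++ h :: B') ∨ ∃ M, B' = M ++ g :: B := by
  rcases List.append_eq_append_iff.1 H with ⟨_ | ⟨x, M⟩, rfl, H'⟩ | ⟨_ | ⟨x, M⟩, rfl, H'⟩
  · simp_all
  · simp only [List.cons_append, List.cons.injEq] at H'
    exact Or.inr (Or.inl ⟨M, H'.2⟩)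
  · simp_all
  · simp only [List.cons_append, List.cons.injEq] at H'
    exact Or.inr (Or.inr ⟨M, H'.2⟩)

theorem List.countP_take_ofFn {α : Type*} {n : ℕ} (g : Fin n → α) (P : α → Prop)
    [DecidablePred P] (k : ℕ) :
    ((List.ofFn g).take k).countP (fun x => decide (P x))
      = {i : Fin n | i.val < k ∧ P (g i)}.ncard := by
  rw [List.ofFn_eq_map, ← List.map_take, List.countP_map]
  refine (((List.nodup_finRange n).sublist (List.take_sublist _ _)).card_eq_countP
    (P := fun i => P (g i))).symm.trans ?_
  rw [← Set.ncard_coe_finset]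
  congr
  ext i
  simp only [Finset.coe_filter, List.mem_toFinset, List.mem_take_iff_getElem,
    List.getElem_finRange, Set.mem_ofPred_eq]
  exact and_congr_left fun _ => ⟨fun ⟨j, hj, hji⟩ => hji ▸ (lt_min_iff.1 hj).1,
    fun hi => ⟨i, by simpa using hi, rfl⟩⟩

theorem Equiv.Perm.exists_ofFn_eq {n : ℕ} {l : List (Fin n)} (h : l.Perm (List.finRange n)) :
    ∃ μ : Equiv.Perm (Fin n), List.ofFn μ = l := by
  have hlen : l.length = n := by simpa using h.length_eq
  refine ⟨(finCongr hlen.symm).trans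
    (h.nodup_iff.2 (List.nodup_finRange n) |>.getEquivOfForallMemList l
      fun x => h.mem_iff.2 (List.mem_finRange x)), ?_⟩
  apply List.ext_getElem (by simp [hlen])
  intro i _ _
  simp

theorem exists_mem_Ioo_forall_le_forall_ge {S T : Set ℝ} (hS : S.Finite) (hT : T.Finite)
    {lo hi : ℝ} (hlohi : lo < hi) (hSh : ∀ s ∈ S, s < hi) (hTl : ∀ t ∈ T, lo < t)
    (hST : ∀ s ∈ S, ∀ t ∈ T, s ≤ t) :
    ∃ ψ ∈ Set.Ioo lo hi, (∀ s ∈ S, s ≤ ψ) ∧ ∀ t ∈ T, ψ ≤ t := by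
  set a := sSup (insert lo S)
  set b := sInf (insert hi T)
  have hSa : ∀ s ∈ insert lo S, s ≤ a := fun s hs => le_csSup (hS.insert lo).bddAbove hs
  have hTb : ∀ t ∈ insert hi T, b ≤ t := fun t ht => csInf_le (hT.insert hi).bddBelow ht
  have ha : a ∈ insert lo S := (Set.insert_nonempty _ _).csSup_mem (hS.insert lo)
  have hb : b ∈ insert hi T := (Set.insert_nonempty _ _).csInf_mem (hT.insert hi)
  have hle : ∀ x ∈ insert lo S, ∀ y ∈ insert hi T, x ≤ y := by
    rintro x (rfl | hx) y (rfl | hy)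
    exacts [hlohi.le, (hTl y hy).le, (hSh x hx).le, hST x hx y hy]
  have ha_hi : a < hi := by
    rcases ha with ha | ha
    exacts [ha ▸ hlohi, hSh a ha]
  have hlo_b : lo < b := by
    rcases hb with hb | hb
    exacts [hb ▸ hlohi, hTl b hb]
  have hab : a ≤ b := hle a ha b hb
  refine ⟨(a + b) / 2, ⟨?_, ?_⟩, fun s hs => ?_, fun t ht => ?_⟩
  · linarith [hSa lo (Set.mem_insert _ _)]
  · linarith [hTb hi (Set.mem_insert _ _)]
  · linarith [hSa s (Set.mem_insert_of_mem _ hs)]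
  · linarith [hTb t (Set.mem_insert_of_mem _ ht)]

theorem mem_Icc2pi {ψ₁ ψ₂ θ : ℝ} (h₁₂ : ψ₁ < ψ₂) (h₂₁ : ψ₂ < ψ₁ + 2 * Real.pi)
    (hθ : θ ∈ Set.Icc (ψ₂ - 2 * Real.pi) ψ₁ ∪ Set.Icc ψ₂ (ψ₁ + 2 * Real.pi)) :
    θ ∈ Icc2pi ψ₂ ψ₁ := by
  rcases hθ with hθ | hθ
  · exact ⟨ψ₂ - 2 * Real.pi, ψ₁, ⟨-1, by push_cast; ring⟩, ⟨0, by simp⟩,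
      by linarith, by linarith, hθ⟩
  · exact ⟨ψ₂, ψ₁ + 2 * Real.pi, ⟨0, by simp⟩, ⟨1, by push_cast; ring⟩,
      by linarith, by linarith, hθ⟩

namespace LinFun

/-- `det (vec g, vec h)`. -/
def cross (g h : LinFun) : ℝ := g.b * (1 - h.a) - h.b * (1 - g.a)

theorem comp_assoc (f g h : LinFun) : (f.comp g).comp h = f.comp (g.comp h) := by
  simp only [comp, mk.injEq]; constructor <;> ring

@[simp] theorem comp_idf (f : LinFun) : f.comp idf = f := by
  simp [comp, idf]

@[simp] theorem idf_comp (f : LinFun) : idf.comp f = f := by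
  simp [comp, idf]

@[simp] theorem a_comp (h g : LinFun) : (h.comp g).a = h.a * g.a := rfl

theorem cross_comm (g h : LinFun) : cross g h = -cross h g := by
  simp only [cross]; ring

theorem cross_mul_one_sub_a (g h w : LinFun) :
    cross g h * (1 - w.a) = cross g w * (1 - h.a) + cross w h * (1 - g.a) := by
  simp only [cross]; ring

open Real

theorem theta_mem_Ico (f : LinFun) : f.theta ∈ Set.Ico 0 (2 * π) := by
  have h₁ := Complex.neg_pi_lt_arg ⟨f.b, 1 - f.a⟩
  have h₂ := Complex.arg_le_pi ⟨f.b, 1 - f.a⟩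
  unfold theta
  split_ifs with h <;> constructor <;> linarith [pi_pos]

theorem vecNorm_eq_norm (f : LinFun) : f.vecNorm = ‖(⟨f.b, 1 - f.a⟩ : ℂ)‖ := by
  rw [vecNorm, Complex.norm_eq_sqrt_sq_add_sq]

theorem vecNorm_mul_cos_theta (f : LinFun) : f.vecNorm * cos f.theta = f.b := by
  have : cos f.theta = cos (Complex.arg ⟨f.b, 1 - f.a⟩) := by
    unfold theta; split_ifs <;> simp
  rw [this, vecNorm_eq_norm, Complex.norm_mul_cos_arg]

theorem vecNorm_mul_sin_theta (f : LinFun) : f.vecNorm * sin f.theta = 1 - f.a := by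
  have : sin f.theta = sin (Complex.arg ⟨f.b, 1 - f.a⟩) := by
    unfold theta; split_ifs <;> simp
  rw [this, vecNorm_eq_norm, Complex.norm_mul_sin_arg]

theorem vecNorm_pos {f : LinFun} (hf : ¬ f.IsId) : 0 < f.vecNorm := by
  refine sqrt_pos.2 (lt_of_le_of_ne (by positivity) fun h => hf ?_)
  have hb : f.b = 0 := by nlinarith [sq_nonneg f.b, sq_nonneg (1 - f.a)]
  have ha : f.a = 1 := by nlinarith [sq_nonneg f.b, sq_nonneg (1 - f.a)]
  obtain ⟨a, b⟩ := f
  simp only at ha hb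
  rw [IsId, idf, ha, hb]

theorem cross_eq_mul_sin (g h : LinFun) :
    cross g h = g.vecNorm * h.vecNorm * sin (h.theta - g.theta) := by
  rw [cross, ← vecNorm_mul_cos_theta g, ← vecNorm_mul_sin_theta g, ← vecNorm_mul_cos_theta h,
    ← vecNorm_mul_sin_theta h, sin_sub]
  ring

theorem cross_pos_of_theta_lt {g h : LinFun} (hg : ¬ g.IsId) (hh : ¬ h.IsId)
    (h₁ : g.theta < h.theta) (h₂ : h.theta < g.theta + π) : 0 < cross g h := by
  rw [cross_eq_mul_sin]
  exact mul_pos (mul_pos (vecNorm_pos hg) (vecNorm_pos hh))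
    (sin_pos_of_pos_of_lt_pi (by linarith) (by linarith))

theorem one_sub_a_pos_of_theta_mem_Ioo {f : LinFun} (hf : ¬ f.IsId)
    (h : f.theta ∈ Set.Ioo 0 π) : 0 < 1 - f.a := by
  rw [← vecNorm_mul_sin_theta]
  exact mul_pos (vecNorm_pos hf) (sin_pos_of_pos_of_lt_pi h.1 h.2)

theorem one_sub_a_neg_of_theta_mem_Ioo {f : LinFun} (hf : ¬ f.IsId)
    (h : f.theta ∈ Set.Ioo π (2 * π)) : 1 - f.a < 0 := by
  rw [← vecNorm_mul_sin_theta, ← sin_sub_two_pi]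
  exact mul_neg_of_pos_of_neg (vecNorm_pos hf)
    (sin_neg_of_neg_of_neg_pi_lt (by linarith [h.2]) (by linarith [h.1]))

theorem a_eq_one_of_theta_eq_zero {f : LinFun} (hf : ¬ f.IsId) (h : f.theta = 0) :
    f.a = 1 ∧ 0 < f.b := by
  have hs := vecNorm_mul_sin_theta f
  have hc := vecNorm_mul_cos_theta f
  rw [h, sin_zero] at hs
  rw [h, cos_zero] at hc
  exact ⟨by linarith, hc ▸ by linarith [vecNorm_pos hf]⟩

theorem a_eq_one_of_theta_eq_pi {f : LinFun} (hf : ¬ f.IsId) (h : f.theta = π) :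
    f.a = 1 ∧ f.b < 0 := by
  have hs := vecNorm_mul_sin_theta f
  have hc := vecNorm_mul_cos_theta f
  rw [h, sin_pi] at hs
  rw [h, cos_pi] at hc
  exact ⟨by linarith, hc ▸ by linarith [vecNorm_pos hf]⟩

end LinFun

open LinFun

theorem foldl_comp_eq_compList_comp (L : List LinFun) (x : LinFun) :
    L.foldl (fun acc g => g.comp acc) x = (compList L).comp x := by
  induction L generalizing x with
  | nil => simp [compList]
  | cons g L ih =>
    simp only [List.foldl_cons, compList]
    rw [ih, ih (g.comp idf), comp_idf, comp_assoc]

@[simp] theorem compList_nil : compList [] = idf := rfl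

theorem compList_append (A B : List LinFun) :
    compList (A ++ B) = (compList B).comp (compList A) := by
  rw [compList, List.foldl_append, foldl_comp_eq_compList_comp]; rfl

@[simp] theorem compList_singleton (g : LinFun) : compList [g] = g := by
  simp [compList]

theorem compList_cons (g : LinFun) (L : List LinFun) :
    compList (g :: L) = (compList L).comp g := by
  rw [← List.singleton_append, compList_append, compList_singleton]

theorem a_compList (L : List LinFun) : (compList L).a = (L.map LinFun.a).prod := by
  induction L with
  | nil => rfl
  | cons g L ih => rw [compList_cons, List.map_cons, List.prod_cons, ← ih, comp, mul_comm]

theorem b_compList_swap_sub (P X Y R : List LinFun) :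
    (compList (P ++ Y ++ X ++ R)).b - (compList (P ++ X ++ Y ++ R)).b
      = (compList R).a * cross (compList X) (compList Y) := by
  simp only [compList_append, comp, cross]; ring

theorem a_compList_ne_zero {L : List LinFun} (hL : ∀ g ∈ L, g.a ≠ 0) : (compList L).a ≠ 0 := by
  rw [a_compList]
  exact List.prod_ne_zero (by simpa using hL)

theorem a_compList_pos_iff {L : List LinFun} (hL : ∀ g ∈ L, g.a ≠ 0) :
    0 < (compList L).a ↔ Even (L.countP (·.a < 0)) := by
  rw [a_compList, List.prod_pos_iff_even_countP_neg (by simpa using hL), List.countP_map]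
  rfl

theorem a_compList_neg_iff {L : List LinFun} (hL : ∀ g ∈ L, g.a ≠ 0) :
    (compList L).a < 0 ↔ ¬ Even (L.countP (·.a < 0)) := by
  rw [← a_compList_pos_iff hL, not_lt, (a_compList_ne_zero hL).le_iff_lt]

def IsSwapMinimal (l : List LinFun) : Prop :=
  ∀ P X Y R, l = P ++ X ++ Y ++ R → (compList l).b ≤ (compList (P ++ Y ++ X ++ R)).b

theorem IsSwapMinimal.a_mul_cross_nonneg {l : List LinFun} (hl : IsSwapMinimal l)
    {P X Y R : List LinFun} (h : l = P ++ X ++ Y ++ R) :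
    0 ≤ (compList R).a * cross (compList X) (compList Y) := by
  have := hl P X Y R h
  rw [h] at this
  linarith [b_compList_swap_sub P X Y R]

theorem IsMinimum.isSwapMinimal {n : ℕ} {f : Fin n → LinFun} {σ : Equiv.Perm (Fin n)}
    (hσ : IsMinimum f σ) : IsSwapMinimal (permList f σ) := by
  intro P X Y R h
  have hmap : ∀ μ : Equiv.Perm (Fin n), permList f μ = (List.ofFn μ).map f := fun μ => by
    rw [List.map_ofFn]; rfl
  rw [hmap] at h
  obtain ⟨PXY', R', hσ', hPXY, rfl⟩ := List.map_eq_append_iff.1 h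
  obtain ⟨PX', Y', rfl, hPX, rfl⟩ := List.map_eq_append_iff.1 hPXY
  obtain ⟨P', X', rfl, rfl, rfl⟩ := List.map_eq_append_iff.1 hPX
  have hσperm : (List.ofFn σ).Perm (List.finRange n) :=
    (List.perm_ext_iff_of_nodup (List.nodup_ofFn.2 σ.injective) (List.nodup_finRange n)).2
      fun x => by simpa using σ.surjective x
  obtain ⟨μ, hμ⟩ := Equiv.Perm.exists_ofFn_eq (l := P' ++ Y' ++ X' ++ R') <| by
    refine List.Perm.trans ?_ (hσ' ▸ hσperm)
    simpa only [List.append_assoc, List.perm_append_left_iff] using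
      List.perm_append_comm.append_right R'
  have := hσ μ
  rw [permComp, permComp, hmap, hmap, hσ', hμ] at this
  simpa only [hmap, hσ', List.map_append] using this

theorem exists_prefix_a_compList_neg {L : List LinFun} (hL : ∀ g ∈ L, g.a ≠ 0) {d : LinFun}
    (hd : d ∈ L) (hda : d.a < 0) : ∃ Y R, L = Y ++ R ∧ (compList Y).a < 0 := by
  obtain ⟨D₁, D₂, rfl⟩ := List.append_of_mem hd
  rcases (a_compList_ne_zero (L := D₁) fun g hg => hL g (by simp [hg])).lt_or_gt with h₁ | h₁
  · exact ⟨D₁, d :: D₂, rfl, h₁⟩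
  · refine ⟨D₁ ++ [d], D₂, by simp, ?_⟩
    rw [compList_append, compList_singleton]
    exact mul_neg_of_neg_of_pos hda h₁

theorem exists_suffix_a_compList_neg {L : List LinFun} (hL : ∀ g ∈ L, g.a ≠ 0) {d : LinFun}
    (hd : d ∈ L) (hda : d.a < 0) : ∃ P X, L = P ++ X ∧ (compList X).a < 0 := by
  rcases (a_compList_ne_zero hL).lt_or_gt with hL' | hL'
  · exact ⟨[], L, rfl, hL'⟩
  obtain ⟨Y, R, rfl, hY⟩ := exists_prefix_a_compList_neg hL hd hda
  rw [compList_append] at hL'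
  exact ⟨Y, R, rfl, neg_of_mul_pos_left hL' hY.le⟩

/-- The paper's `L^σ` (for `l = permList f σ`): nondecreasing functions followed by an even
number of decreasing ones, i.e. by a block whose composite has positive slope. -/
def lPart (l : List LinFun) : Set LinFun :=
  {g | 0 < g.a ∧ ∃ A B, l = A ++ g :: B ∧ 0 < (compList B).a}

/-- The paper's `U^σ`: nondecreasing functions followed by an odd number of decreasing ones. -/
def uPart (l : List LinFun) : Set LinFun :=
  {g | 0 < g.a ∧ ∃ A B, l = A ++ g :: B ∧ (compList B).a < 0}

theorem lPart_subset (l : List LinFun) : lPart l ⊆ {g | g ∈ l} := by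
  rintro g ⟨-, A, B, rfl, -⟩
  simp

theorem uPart_subset (l : List LinFun) : uPart l ⊆ {g | g ∈ l} := by
  rintro g ⟨-, A, B, rfl, -⟩
  simp

namespace IsSwapMinimal

variable {l : List LinFun} (hl : IsSwapMinimal l)
include hl

-- Some block next to `g` has a decreasing composite, so its vector points strictly upward,
-- while `vec g = (β g, 0)`; exchanging the two bounds the sign of `β g`.
theorem b_nonpos_of_mem_lPart (hne : ∀ g ∈ l, g.a ≠ 0) (hdec : ∃ d ∈ l, d.a < 0)
    {g : LinFun} (hg : g ∈ lPart l) (hg1 : g.a = 1) : g.b ≤ 0 := by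
  obtain ⟨-, A, B, rfl, hB⟩ := hg
  obtain ⟨d, hd, hda⟩ := hdec
  rw [List.mem_append, List.mem_cons] at hd
  rcases hd with hd | rfl | hd
  · obtain ⟨P, X, rfl, hX⟩ :=
      exists_suffix_a_compList_neg (fun g hg => hne g (by simp [hg])) hd hda
    have := nonneg_of_mul_nonneg_right
      (hl.a_mul_cross_nonneg (P := P) (X := X) (Y := [g]) (R := B) (by simp)) hB
    rw [compList_singleton, cross, hg1] at this
    nlinarith
  · linarith
  · obtain ⟨Y, R, rfl, hY⟩ :=
      exists_prefix_a_compList_neg (fun g hg => hne g (by simp [hg])) hd hda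
    rw [compList_append, a_comp] at hB
    have := nonpos_of_mul_nonneg_right
      (hl.a_mul_cross_nonneg (P := A) (X := [g]) (Y := Y) (R := R) (by simp))
      (neg_of_mul_pos_left hB hY.le)
    rw [compList_singleton, cross, hg1] at this
    nlinarith

theorem b_nonneg_of_mem_uPart {g : LinFun} (hg : g ∈ uPart l) (hg1 : g.a = 1) : 0 ≤ g.b := by
  obtain ⟨-, A, B, rfl, hB⟩ := hg
  have := hl.a_mul_cross_nonneg (P := A) (X := [g]) (Y := B) (R := []) (by simp)
  rw [compList_singleton, compList_nil, cross, hg1] at this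
  simp only [idf, one_mul] at this
  nlinarith

-- `vec M` points strictly upward, and the exchanges of `M` with `g` and with `h` place it
-- angularly between `vec g` and `vec h`.
theorem a_mul_one_sub_a_mul_cross_nonneg {A M B : List LinFun} {g h : LinFun}
    (hsplit : l = A ++ g :: (M ++ h :: B)) (hh : 0 < h.a) (hM : (compList M).a < 0)
    (hgh : 0 < (1 - g.a) * (1 - h.a)) :
    0 ≤ (compList B).a * ((1 - g.a) * cross g h) := by
  have hgM : 0 ≤ (compList B).a * cross g (compList M) := by
    have := hl.a_mul_cross_nonneg (P := A) (X := [g]) (Y := M) (R := h :: B) (by simp [hsplit])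
    rw [compList_singleton, compList_cons, a_comp, mul_comm (compList B).a, mul_assoc] at this
    exact nonneg_of_mul_nonneg_right this hh
  have hMh : 0 ≤ (compList B).a * cross (compList M) h := by
    simpa using
      hl.a_mul_cross_nonneg (P := A ++ [g]) (X := M) (Y := [h]) (R := B) (by simp [hsplit])
  have hprod : (compList B).a * ((1 - g.a) * cross g h) * (1 - (compList M).a)
      = (1 - g.a) * (1 - h.a) * ((compList B).a * cross g (compList M))
        + (1 - g.a) ^ 2 * ((compList B).a * cross (compList M) h) := by
    linear_combination ((compList B).a * (1 - g.a)) * cross_mul_one_sub_a g h (compList M)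
  refine nonneg_of_mul_nonneg_left ?_ (by linarith : 0 < 1 - (compList M).a)
  rw [hprod]
  exact add_nonneg (mul_nonneg hgh.le hgM) (mul_nonneg (sq_nonneg _) hMh)

theorem one_sub_a_mul_cross_nonpos {g h : LinFun} (hg : g ∈ lPart l)
    (hh : h ∈ uPart l) (hgh : 0 < (1 - g.a) * (1 - h.a)) : (1 - g.a) * cross g h ≤ 0 := by
  obtain ⟨hga, A, B, hA, hB⟩ := hg
  obtain ⟨hha, A', B', hA', hB'⟩ := hh
  rcases List.eq_or_exists_of_append_cons_eq (hA.symm.trans hA') with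
    ⟨-, -, rfl⟩ | ⟨M, rfl⟩ | ⟨M, rfl⟩
  · linarith
  · rw [compList_append, compList_cons, a_comp, a_comp] at hB
    have hM := neg_of_mul_pos_right hB (mul_neg_of_neg_of_pos hB' hha).le
    exact nonpos_of_mul_nonneg_right (hl.a_mul_one_sub_a_mul_cross_nonneg hA hha hM hgh) hB'
  · rw [compList_append, compList_cons, a_comp, a_comp] at hB'
    have hM := neg_of_mul_neg_right hB' (mul_pos hB hga).le
    have := nonneg_of_mul_nonneg_right
      (hl.a_mul_one_sub_a_mul_cross_nonneg hA' hga hM (by linarith)) hB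
    rw [cross_comm] at this
    refine nonpos_of_mul_nonpos_left ?_ hgh
    nlinarith [mul_nonneg (sq_nonneg (1 - g.a)) this]

section

open Real

variable (hid : ∀ g ∈ l, ¬ g.IsId)
include hid

theorem theta_ne_zero_of_mem_lPart (hne : ∀ g ∈ l, g.a ≠ 0) (hdec : ∃ d ∈ l, d.a < 0)
    {g : LinFun} (hg : g ∈ lPart l) : g.theta ≠ 0 := fun h => by
  obtain ⟨ha, hb⟩ := a_eq_one_of_theta_eq_zero (hid g (lPart_subset l hg)) h
  exact (hl.b_nonpos_of_mem_lPart hne hdec hg ha).not_gt hb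

theorem theta_ne_pi_of_mem_uPart {g : LinFun} (hg : g ∈ uPart l) : g.theta ≠ π := fun h => by
  obtain ⟨ha, hb⟩ := a_eq_one_of_theta_eq_pi (hid g (uPart_subset l hg)) h
  exact (hl.b_nonneg_of_mem_uPart hg ha).not_gt hb

theorem theta_le_theta_of_lt_pi (hne : ∀ g ∈ l, g.a ≠ 0) (hdec : ∃ d ∈ l, d.a < 0)
    {g h : LinFun} (hg : g ∈ lPart l) (hh : h ∈ uPart l) (hπ : h.theta < π) :
    h.theta ≤ g.theta := by
  by_contra! hlt
  have hg' := hid g (lPart_subset l hg)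
  have hh' := hid h (uPart_subset l hh)
  have hg0 : 0 < g.theta :=
    (g.theta_mem_Ico.1).lt_of_ne (hl.theta_ne_zero_of_mem_lPart hid hne hdec hg).symm
  have hgy := one_sub_a_pos_of_theta_mem_Ioo hg' ⟨hg0, hlt.trans hπ⟩
  have hhy := one_sub_a_pos_of_theta_mem_Ioo hh' ⟨hg0.trans hlt, hπ⟩
  have hc := cross_pos_of_theta_lt hg' hh' hlt (by linarith)
  linarith [hl.one_sub_a_mul_cross_nonpos hg hh (mul_pos hgy hhy), mul_pos hgy hc]

theorem theta_le_theta_of_pi_lt {g h : LinFun} (hg : g ∈ lPart l) (hh : h ∈ uPart l)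
    (hπ : π < h.theta) : g.theta ≤ h.theta := by
  by_contra! hlt
  have hg' := hid g (lPart_subset l hg)
  have hh' := hid h (uPart_subset l hh)
  have hgy := one_sub_a_neg_of_theta_mem_Ioo hg' ⟨hπ.trans hlt, g.theta_mem_Ico.2⟩
  have hhy := one_sub_a_neg_of_theta_mem_Ioo hh' ⟨hπ, h.theta_mem_Ico.2⟩
  have hc := cross_pos_of_theta_lt hh' hg' hlt (by linarith [g.theta_mem_Ico.2])
  have := hl.one_sub_a_mul_cross_nonpos hg hh (mul_pos_of_neg_of_neg hgy hhy)
  rw [cross_comm] at this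
  linarith [mul_pos_of_neg_of_neg hgy (neg_neg_of_pos hc)]

theorem exists_theta_separation (hne : ∀ g ∈ l, g.a ≠ 0) (hdec : ∃ d ∈ l, d.a < 0) :
    ∃ ψ₁ ψ₂ : ℝ, ψ₁ ∈ Set.Ioo 0 π ∧ ψ₂ ∈ Set.Ioo π (2 * π) ∧
      (∀ g ∈ lPart l, g.theta ∈ Set.Icc ψ₁ ψ₂) ∧ ∀ g ∈ uPart l, g.theta ∈ Icc2pi ψ₂ ψ₁ := by
  have hfin : ∀ s ⊆ {g | g ∈ l}, (theta '' s).Finite := fun s hs =>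
    ((List.finite_toSet l).subset hs).image _
  obtain ⟨ψ₁, hψ₁, hU₁, hL₁⟩ := exists_mem_Ioo_forall_le_forall_ge
    (S := theta '' (uPart l ∩ {g | g.theta < π})) (T := theta '' lPart l)
    (hfin _ (Set.inter_subset_left.trans (uPart_subset l))) (hfin _ (lPart_subset l)) pi_pos
    (by rintro _ ⟨g, hg, rfl⟩; exact hg.2)
    (by rintro _ ⟨g, hg, rfl⟩
        exact g.theta_mem_Ico.1.lt_of_ne (hl.theta_ne_zero_of_mem_lPart hid hne hdec hg).symm)
    (by rintro _ ⟨h, hh, rfl⟩ _ ⟨g, hg, rfl⟩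
        exact hl.theta_le_theta_of_lt_pi hid hne hdec hg hh.1 hh.2)
  obtain ⟨ψ₂, hψ₂, hL₂, hU₂⟩ := exists_mem_Ioo_forall_le_forall_ge
    (S := theta '' lPart l) (T := theta '' (uPart l ∩ {g | π < g.theta}))
    (lo := π) (hi := 2 * π)
    (hfin _ (lPart_subset l)) (hfin _ (Set.inter_subset_left.trans (uPart_subset l)))
    (by linarith [pi_pos])
    (by rintro _ ⟨g, -, rfl⟩; exact g.theta_mem_Ico.2)
    (by rintro _ ⟨g, hg, rfl⟩; exact hg.2)
    (by rintro _ ⟨g, hg, rfl⟩ _ ⟨h, hh, rfl⟩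
        exact hl.theta_le_theta_of_pi_lt hid hg hh.1 hh.2)
  refine ⟨ψ₁, ψ₂, hψ₁, hψ₂, fun g hg => ⟨hL₁ _ ⟨g, hg, rfl⟩, hL₂ _ ⟨g, hg, rfl⟩⟩,
    fun g hg => mem_Icc2pi (hψ₁.2.trans hψ₂.1) (by linarith [hψ₁.1, hψ₂.2]) ?_⟩
  rcases lt_trichotomy g.theta π with h | h | h
  · exact Or.inl ⟨by linarith [g.theta_mem_Ico.1, hψ₂.2], hU₁ _ ⟨g, ⟨hg, h⟩, rfl⟩⟩
  · exact absurd h (hl.theta_ne_pi_of_mem_uPart hid hg)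
  · exact Or.inr ⟨hU₂ _ ⟨g, ⟨hg, h⟩, rfl⟩, by linarith [g.theta_mem_Ico.2, hψ₁.1]⟩

end

end IsSwapMinimal

theorem permList_eq_take_append_cons_drop {n : ℕ} (f : Fin n → LinFun) (σ : Equiv.Perm (Fin n))
    (i : Fin n) :
    permList f σ = (permList f σ).take i ++ f (σ i) :: (permList f σ).drop (i + 1) := by
  conv_lhs => rw [← List.take_append_drop i (permList f σ)]
  rw [← List.getElem_cons_drop (i := i.val) (by simp [permList])]
  simp [permList]

theorem countP_drop_permList {n : ℕ} (f : Fin n → LinFun) (σ : Equiv.Perm (Fin n)) {i : Fin n}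
    (hi : ¬ (f (σ i)).a < 0) :
    ((permList f σ).drop (i + 1)).countP (fun g => decide (g.a < 0))
      = {j : Fin n | (f j).a < 0}.ncard - {p : Fin n | p < i ∧ (f (σ p)).a < 0}.ncard := by
  have htotal : (permList f σ).countP (fun g => decide (g.a < 0)) = {j | (f j).a < 0}.ncard := by
    rw [← List.take_length (l := permList f σ), permList, List.countP_take_ofFn, List.length_ofFn]
    simp only [Fin.is_lt, true_and]
    exact Set.ncard_preimage_of_injective_subset_range (s := {j | (f j).a < 0}) σ.injective
      (by simp)
  have hprefix : ((permList f σ).take i).countP (fun g => decide (g.a < 0))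
      = {p : Fin n | p < i ∧ (f (σ p)).a < 0}.ncard := by
    rw [permList, List.countP_take_ofFn]
    rfl
  have hsplit := congrArg (List.countP (fun g : LinFun => decide (g.a < 0)))
    (permList_eq_take_append_cons_drop f σ i)
  rw [List.countP_append, List.countP_cons, htotal, hprefix] at hsplit
  simp only [hi, decide_false, Bool.false_eq_true, if_false] at hsplit
  omega

/-- A nondecreasing position `i` (i.e. `0 < α(f_{σ(i)})`, since there are no constants)
belongs to `I^σ_j` where `j` is the number of decreasing positions before `i`; it lies
in `L^σ` iff `k - j` is even, where `k` is the total number of decreasing functions. -/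
theorem stmt18 {n : ℕ} (f : Fin n → LinFun)
    (hnconst : ∀ i, (f i).a ≠ 0) (hnid : ∀ i, ¬ (f i).IsId)
    (hdec : ∃ i, (f i).a < 0)
    (σ : Equiv.Perm (Fin n)) (hopt : IsMinimum f σ) :
    ∃ ψ1 ψ2 : ℝ, ψ1 ∈ Set.Ioo 0 Real.pi ∧ ψ2 ∈ Set.Ioo Real.pi (2 * Real.pi) ∧
      (∀ i : Fin n, 0 < (f (σ i)).a →
        Even ({j : Fin n | (f j).a < 0}.ncard
              - {p : Fin n | p < i ∧ (f (σ p)).a < 0}.ncard) →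
        (f (σ i)).theta ∈ Set.Icc ψ1 ψ2) ∧
      (∀ i : Fin n, 0 < (f (σ i)).a →
        ¬ Even ({j : Fin n | (f j).a < 0}.ncard
              - {p : Fin n | p < i ∧ (f (σ p)).a < 0}.ncard) →
        (f (σ i)).theta ∈ Icc2pi ψ2 ψ1) := by
  have hne : ∀ g ∈ permList f σ, g.a ≠ 0 := by simp [permList, hnconst]
  have hid : ∀ g ∈ permList f σ, ¬ g.IsId := by simp [permList, hnid]
  have hdec' : ∃ d ∈ permList f σ, d.a < 0 := by
    obtain ⟨j, hj⟩ := hdec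
    exact ⟨f j, by simpa [permList] using ⟨σ.symm j, by simp⟩, hj⟩
  obtain ⟨ψ₁, ψ₂, hψ₁, hψ₂, hL, hU⟩ := hopt.isSwapMinimal.exists_theta_separation hid hne hdec'
  have hne' : ∀ (i : Fin n), ∀ g ∈ (permList f σ).drop (i + 1), g.a ≠ 0 :=
    fun i g hg => hne g (List.mem_of_mem_drop hg)
  refine ⟨ψ₁, ψ₂, hψ₁, hψ₂,
    fun i hi heven => hL _ ⟨hi, _, _, permList_eq_take_append_cons_drop f σ i, ?_⟩,
    fun i hi hodd => hU _ ⟨hi, _, _, permList_eq_take_append_cons_drop f σ i, ?_⟩⟩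
  · rwa [a_compList_pos_iff (hne' i), countP_drop_permList f σ hi.not_gt]
  · rwa [a_compList_neg_iff (hne' i), countP_drop_permList f σ hi.not_gt]
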